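/- arXiv:2109.04481 — 2 statements merged into one kernel-verified Lean document; each statement's English description precedes it below -/
import Mathlib

section
/- Overhead bound: suppose F is closed under tensor powers (σ ∈ F ⟹ σ^{⊗k} ∈ F appropriately) and Ω(ρ) > 1. If there is a probabilistic free transformation of ρ^{⊗n} to a state τ with ⟨φ|τ|φ⟩ ≥ 1 - ε for a pure state φ with 0 < F_F(φ) < 1 and ε < 1 - F_F(φ), then n ≥ log_{Ω(ρ)} [ (1-ε)(1-F_F(φ)) / (ε F_F(φ)) ]. -/
open scoped ENNReal NNReal ComplexOrder
open Matrix

variable {ι κ : Type*}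

/-- Max-relative entropy (non-logarithmic): `inf { λ ≥ 0 : ρ ≤ λσ }`, with `inf ∅ = ∞`.
Here `A ≤ B` means `B - A` is positive semidefinite. -/
noncomputable def Rmax [Fintype ι] (ρ σ : Matrix ι ι ℂ) : ℝ≥0∞ :=
  sInf {x : ℝ≥0∞ | ∃ l : ℝ≥0, x = (l : ℝ≥0∞) ∧ ((l : ℝ) • σ - ρ).PosSemidef}

/-- A state: positive semidefinite with unit trace. -/
def IsState [Fintype ι] (ρ : Matrix ι ι ℂ) : Prop :=
  ρ.PosSemidef ∧ ρ.trace = 1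

/-- A pure state: a rank-one (idempotent) state. -/
def IsPure [Fintype ι] (φ : Matrix ι ι ℂ) : Prop :=
  φ.PosSemidef ∧ φ * φ = φ ∧ φ.trace = 1

/-- The cone generated by a set of states. -/
noncomputable def cone (F : Set (Matrix ι ι ℂ)) : Set (Matrix ι ι ℂ) :=
  {x | ∃ (l : ℝ≥0) (σ : Matrix ι ι ℂ), σ ∈ F ∧ x = (l : ℝ) • σ}

/-- Projective robustness `Ω(ρ) = inf_{σ ∈ F} Rmax(ρ‖σ) Rmax(σ‖ρ)`. -/
noncomputable def Omega [Fintype ι] (F : Set (Matrix ι ι ℂ)) (ρ : Matrix ι ι ℂ) : ℝ≥0∞ :=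
  ⨅ σ ∈ F, Rmax ρ σ * Rmax σ ρ

/-- Support of an operator, as the range of the associated linear map. -/
noncomputable def msupport [Fintype ι] (ρ : Matrix ι ι ℂ) : Submodule ℂ (ι → ℂ) :=
  LinearMap.range ρ.mulVecLin

/-- A positive linear map on matrices. -/
def IsPosMap [Fintype ι] [Fintype κ] (E : Matrix ι ι ℂ →ₗ[ℂ] Matrix κ κ ℂ) : Prop :=
  ∀ ρ, ρ.PosSemidef → (E ρ).PosSemidef

/-- Maximal fidelity with the free set: `F_F(φ) = max_{σ ∈ F} ⟨φ|σ|φ⟩ = max_{σ ∈ F} Tr(φσ)`. -/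
noncomputable def Ffree [Fintype ι] (F : Set (Matrix ι ι ℂ)) (φ : Matrix ι ι ℂ) : ℝ :=
  sSup {x : ℝ | ∃ σ ∈ F, x = ((φ * σ).trace).re}
/-- `n`-fold tensor power of a matrix (iterated Kronecker product). -/
noncomputable def tpow [Fintype ι] (ρ : Matrix ι ι ℂ) (n : ℕ) :
    Matrix (Fin n → ι) (Fin n → ι) ℂ :=
  Matrix.of fun i j => ∏ t, ρ (i t) (j t)

/-!
If `λσ ≥ ρ` and `μρ ≥ σ` for a free `σ`, then `λⁿσ^{⊗n} ≥ ρ^{⊗n}` and `μⁿρ^{⊗n} ≥ σ^{⊗n}`;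
applying `E`, with `E(σ^{⊗n}) = kσ'` for a free `σ'`, gives `λⁿkσ' ≥ pτ` and `μⁿpτ ≥ kσ'`.
Testing the first with `φ` and the second with `1 - φ`, and using `⟨φ|σ'|φ⟩ ≤ F_F(φ)`, yields
`(1-ε)/F_F(φ) ≤ λⁿk/p` and `(1-F_F(φ))/ε ≤ μⁿp/k`, whose product is `(λμ)ⁿ`.
Taking the infimum over `σ`, `λ`, `μ` replaces `λμ` by `Ω(ρ)`.
-/
open scoped Kronecker

section TensorPower

variable [Fintype ι]

lemma tpow_zero (X : Matrix ι ι ℂ) : tpow X 0 = vecMulVec (fun _ => 1) (star fun _ => 1) := by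
  ext i j
  simp [tpow, vecMulVec_apply]

lemma tpow_succ (X : Matrix ι ι ℂ) (n : ℕ) :
    tpow X (n + 1) = (X ⊗ₖ tpow X n).submatrix (fun i => (i 0, Fin.tail i))
      (fun i => (i 0, Fin.tail i)) := by
  ext i j
  simp [tpow, Fin.prod_univ_succ, Fin.tail]

lemma tpow_smul (r : ℝ) (X : Matrix ι ι ℂ) (n : ℕ) : tpow (r • X) n = (r ^ n) • tpow X n := by
  ext i j
  simp [tpow, Finset.prod_mul_distrib, Complex.real_smul]

lemma posSemidef_tpow {X : Matrix ι ι ℂ} (hX : X.PosSemidef) (n : ℕ) :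
    (tpow X n).PosSemidef := by
  induction n with
  | zero => rw [tpow_zero]; exact posSemidef_vecMulVec_self_star _
  | succ n ih => rw [tpow_succ]; exact (hX.kronecker ih).submatrix _

lemma posSemidef_tpow_sub_tpow {A B : Matrix ι ι ℂ} (hA : A.PosSemidef)
    (hAB : (B - A).PosSemidef) (n : ℕ) : (tpow B n - tpow A n).PosSemidef := by
  have hB : B.PosSemidef := by simpa using hAB.add hA
  induction n with
  | zero => simpa [tpow_zero] using PosSemidef.zero
  | succ n ih =>
    have hsplit : B ⊗ₖ tpow B n - A ⊗ₖ tpow A n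
        = B ⊗ₖ (tpow B n - tpow A n) + (B - A) ⊗ₖ tpow A n := by
      ext ⟨i, j⟩ ⟨k, l⟩
      simp only [Matrix.sub_apply, Matrix.add_apply, kroneckerMap_apply]
      ring
    have hkron : (B ⊗ₖ tpow B n - A ⊗ₖ tpow A n).PosSemidef := by
      rw [hsplit]
      exact (hB.kronecker ih).add (hAB.kronecker (posSemidef_tpow hA n))
    rw [tpow_succ, tpow_succ]
    exact hkron.submatrix _

end TensorPower

section Trace

variable [Fintype ι]

lemma Matrix.PosSemidef.re_trace_nonneg {A : Matrix ι ι ℂ} (hA : A.PosSemidef) :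
    0 ≤ A.trace.re :=
  (Complex.le_def.mp hA.trace_nonneg).1

open scoped MatrixOrder in
lemma Matrix.PosSemidef.re_trace_mul_le {P X Y : Matrix ι ι ℂ} (hP : P.PosSemidef)
    (hXY : (X - Y).PosSemidef) : (P * Y).trace.re ≤ (P * X).trace.re := by
  classical
  obtain ⟨C, hC⟩ := CStarAlgebra.nonneg_iff_eq_star_mul_self.mp hXY.nonneg
  have h := (hP.mul_mul_conjTranspose_same C).re_trace_nonneg
  rw [← trace_mul_cycle, ← star_eq_conjTranspose, Matrix.mul_assoc, ← hC, Matrix.mul_sub,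
    trace_sub] at h
  simpa [sub_nonneg] using h

lemma IsState.one_le_of_posSemidef_smul_sub {ρ σ : Matrix ι ι ℂ} (hρ : IsState ρ)
    (hσ : IsState σ) {l : ℝ} (h : (l • σ - ρ).PosSemidef) : 1 ≤ l := by
  simpa [trace_sub, trace_smul, hρ.2, hσ.2] using h.re_trace_nonneg

lemma IsPure.posSemidef_one_sub [DecidableEq ι] {φ : Matrix ι ι ℂ} (hφ : IsPure φ) :
    (1 - φ).PosSemidef := by
  have hproj : (1 - φ)ᴴ * (1 - φ) = 1 - φ := by
    rw [conjTranspose_sub, conjTranspose_one, hφ.1.isHermitian.eq, Matrix.sub_mul,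
      Matrix.mul_sub, Matrix.mul_sub, hφ.2.1]
    simp
  exact hproj ▸ posSemidef_conjTranspose_mul_self _

lemma IsPure.re_trace_mul_le_one [DecidableEq ι] {φ σ : Matrix ι ι ℂ} (hφ : IsPure φ)
    (hσ : IsState σ) : (φ * σ).trace.re ≤ 1 := by
  have h := hφ.posSemidef_one_sub.re_trace_mul_le (X := σ) (Y := 0) (by simpa using hσ.1)
  simpa [Matrix.sub_mul, trace_sub, hσ.2] using h

lemma re_trace_mul_le_Ffree [DecidableEq ι] {G : Set (Matrix ι ι ℂ)}
    (hG : ∀ σ ∈ G, IsState σ) {φ σ : Matrix ι ι ℂ} (hφ : IsPure φ) (hσ : σ ∈ G) :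
    (φ * σ).trace.re ≤ Ffree G φ := by
  refine le_csSup ⟨1, ?_⟩ ⟨σ, hσ, rfl⟩
  rintro _ ⟨σ', hσ', rfl⟩
  exact hφ.re_trace_mul_le_one (hG σ' hσ')

end Trace

section Fidelity

variable [Fintype κ] [DecidableEq κ] {G : Set (Matrix κ κ ℂ)} {φ τ σ : Matrix κ κ ℂ}
  {ε p l a b : ℝ}

lemma overhead_ratio_le_mul (hG : ∀ σ ∈ G, IsState σ) (hφ : IsPure φ) (hτ : IsState τ)
    (hσG : σ ∈ G) (hf0 : 0 < Ffree G φ) (hε0 : 0 < ε) (hε : ε < 1 - Ffree G φ)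
    (hfid : 1 - ε ≤ (φ * τ).trace.re) (hp : 0 < p) (hl : 0 ≤ l) (ha : 0 ≤ a) (hb : 0 ≤ b)
    (h₁ : (a • l • σ - p • τ).PosSemidef) (h₂ : (b • p • τ - l • σ).PosSemidef) :
    (1 - ε) * (1 - Ffree G φ) / (ε * Ffree G φ) ≤ a * b := by
  set f := Ffree G φ
  set t := (φ * τ).trace.re
  set s := (φ * σ).trace.re
  have hσ := hG σ hσG
  have hsf : s ≤ f := re_trace_mul_le_Ffree hG hφ hσG
  have ht1 : t ≤ 1 := hφ.re_trace_mul_le_one hτ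
  have hφ₁ : p * t ≤ a * (l * s) := by
    simpa [Matrix.mul_smul, trace_smul] using hφ.1.re_trace_mul_le h₁
  have hφ₂ : l * (1 - s) ≤ b * (p * (1 - t)) := by
    simpa [Matrix.mul_smul, Matrix.sub_mul, trace_sub, trace_smul, hσ.2, hτ.2] using
      hφ.posSemidef_one_sub.re_trace_mul_le h₂
  have hA : p * (1 - ε) ≤ a * l * f := by nlinarith [mul_nonneg ha hl]
  have hB : l * (1 - f) ≤ b * p * ε := by nlinarith [mul_nonneg hb hp.le]
  have hl0 : 0 < l := hl.lt_of_ne (by rintro rfl; nlinarith)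
  have hprod : (1 - ε) * (1 - f) * (p * l) ≤ a * b * (ε * f) * (p * l) := by
    nlinarith [mul_le_mul hA hB (by nlinarith) (by positivity)]
  rw [div_le_iff₀ (by positivity)]
  exact le_of_mul_le_mul_right hprod (by positivity)

end Fidelity

section Robustness

variable [Fintype ι] {ρ σ : Matrix ι ι ℂ}

lemma Rmax_eq_iInf (ρ σ : Matrix ι ι ℂ) :
    Rmax ρ σ = ⨅ l : {l : ℝ≥0 // ((l : ℝ) • σ - ρ).PosSemidef}, (l : ℝ≥0∞) := by
  rw [Rmax, ← sInf_range]
  congr 1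
  ext x
  simp [eq_comm, and_comm]

lemma one_le_Rmax (hρ : IsState ρ) (hσ : IsState σ) : 1 ≤ Rmax ρ σ := by
  rw [Rmax_eq_iInf]
  exact le_iInf fun l => by exact_mod_cast hρ.one_le_of_posSemidef_smul_sub hσ l.2

lemma exists_mul_lt_of_Rmax_mul_Rmax_lt (hρ : IsState ρ) (hσ : IsState σ) {c : ℝ≥0∞}
    (h : Rmax ρ σ * Rmax σ ρ < c) :
    ∃ l m : ℝ≥0, ((l : ℝ) • σ - ρ).PosSemidef ∧ ((m : ℝ) • ρ - σ).PosSemidef ∧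
      ((l * m : ℝ≥0) : ℝ≥0∞) < c := by
  have hρσ : Rmax ρ σ < ⊤ :=
    (le_mul_of_one_le_right' (one_le_Rmax hσ hρ)).trans_lt (h.trans_le le_top)
  have hσρ : Rmax σ ρ < ⊤ :=
    (le_mul_of_one_le_left' (one_le_Rmax hρ hσ)).trans_lt (h.trans_le le_top)
  rw [Rmax_eq_iInf, iInf_lt_top] at hρσ hσρ
  by_contra! hc
  refine h.not_ge ?_
  rw [Rmax_eq_iInf, Rmax_eq_iInf]
  exact ENNReal.le_iInf_mul_iInf (hρσ.imp fun _ => ne_of_lt) (hσρ.imp fun _ => ne_of_lt)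
    fun l m => by exact_mod_cast hc l m l.2 m.2

lemma exists_mul_lt_of_Omega_lt {F : Set (Matrix ι ι ℂ)} (hF : ∀ σ ∈ F, IsState σ)
    (hρ : IsState ρ) {c : ℝ≥0∞} (h : Omega F ρ < c) :
    ∃ σ ∈ F, ∃ l m : ℝ≥0, ((l : ℝ) • σ - ρ).PosSemidef ∧ ((m : ℝ) • ρ - σ).PosSemidef ∧
      ((l * m : ℝ≥0) : ℝ≥0∞) < c := by
  obtain ⟨σ, hσF, hσ⟩ : ∃ σ ∈ F, Rmax ρ σ * Rmax σ ρ < c := by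
    simpa [Omega, iInf_lt_iff] using h
  exact ⟨σ, hσF, exists_mul_lt_of_Rmax_mul_Rmax_lt hρ (hF σ hσF) hσ⟩

end Robustness

lemma le_pow_of_forall_lt {x y : ℝ} {n : ℕ} (h : ∀ c, x < c → y ≤ c ^ n) : y ≤ x ^ n :=
  ge_of_tendsto ((continuous_pow n).tendsto x |>.mono_left nhdsWithin_le_nhds)
    (eventually_nhdsWithin_of_forall (s := Set.Ioi x) h)

theorem omega_distillation_overhead_general [Fintype ι]
    [Fintype κ] [DecidableEq κ] (n : ℕ)
    (F : Set (Matrix ι ι ℂ)) (hFstate : ∀ σ ∈ F, IsState σ)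
    (Fn : Set (Matrix (Fin n → ι) (Fin n → ι) ℂ))
    (htens : ∀ σ ∈ F, tpow σ n ∈ Fn)
    (G : Set (Matrix κ κ ℂ)) (hGstate : ∀ σ ∈ G, IsState σ)
    (ρ : Matrix ι ι ℂ) (hρ : IsState ρ)
    (hΩgt : 1 < Omega F ρ) (hΩfin : Omega F ρ ≠ ⊤)
    (φ : Matrix κ κ ℂ) (hφ : IsPure φ)
    (hFφ0 : 0 < Ffree G φ)
    (E : Matrix (Fin n → ι) (Fin n → ι) ℂ →ₗ[ℂ] Matrix κ κ ℂ) (hE : IsPosMap E)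
    (hEfree : ∀ x ∈ cone Fn, E x ∈ cone G)
    (τ : Matrix κ κ ℂ) (hτ : IsState τ)
    (p : ℝ) (hp : 0 < p) (hEρ : E (tpow ρ n) = p • τ)
    (ε : ℝ) (hε0 : 0 < ε) (hε : ε < 1 - Ffree G φ)
    (hfid : 1 - ε ≤ ((φ * τ).trace).re) :
    Real.logb (Omega F ρ).toReal ((1 - ε) * (1 - Ffree G φ) / (ε * Ffree G φ)) ≤ n := by
  have hbase : 1 < (Omega F ρ).toReal := by
    simpa using (ENNReal.toReal_lt_toReal ENNReal.one_ne_top hΩfin).mpr hΩgt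
  have hratio : 0 < (1 - ε) * (1 - Ffree G φ) / (ε * Ffree G φ) := by
    apply div_pos <;> nlinarith
  rw [Real.logb_le_iff_le_rpow hbase hratio, Real.rpow_natCast]
  refine le_pow_of_forall_lt fun c hc => ?_
  obtain ⟨σ, hσF, l, m, hl, hm, hlm⟩ := exists_mul_lt_of_Omega_lt hFstate hρ
    ((ENNReal.lt_ofReal_iff_toReal_lt hΩfin).mpr hc)
  obtain ⟨k, σ', hσ'G, hEσ⟩ := hEfree _ ⟨1, _, htens σ hσF, (one_smul ℝ _).symm⟩
  have h₁ := hE _ (posSemidef_tpow_sub_tpow hρ.1 hl n)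
  have h₂ := hE _ (posSemidef_tpow_sub_tpow (hFstate σ hσF).1 hm n)
  rw [tpow_smul, map_sub, LinearMap.map_smul_of_tower, hEσ, hEρ] at h₁ h₂
  calc (1 - ε) * (1 - Ffree G φ) / (ε * Ffree G φ)
      ≤ (l : ℝ) ^ n * (m : ℝ) ^ n :=
        overhead_ratio_le_mul hGstate hφ hτ hσ'G hFφ0 hε0 hε hfid hp k.2 (by positivity)
          (by positivity) h₁ h₂
    _ ≤ c ^ n := by
      rw [← mul_pow]
      have hc0 : 0 ≤ c := ENNReal.toReal_nonneg.trans hc.le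
      exact pow_le_pow_left₀ (by positivity)
        (by simpa using ENNReal.toReal_le_of_le_ofReal hc0 hlm.le) n

/-- overhead bound: any probabilistic free transformation of `ρ^{⊗n}` into a state
`τ` with fidelity `⟨φ|τ|φ⟩ ≥ 1-ε` to a resourceful pure `φ` requires
`n ≥ log_{Ω(ρ)} [(1-ε)(1-F_F(φ)) / (ε F_F(φ))]`. -/
theorem omega_distillation_overhead [Fintype ι] [DecidableEq ι]
    [Fintype κ] [DecidableEq κ] (n : ℕ)
    (F : Set (Matrix ι ι ℂ)) (hFne : F.Nonempty) (hFcpt : IsCompact F)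
    (hFconv : Convex ℝ F) (hFstate : ∀ σ ∈ F, IsState σ)
    (Fn : Set (Matrix (Fin n → ι) (Fin n → ι) ℂ)) (hFnne : Fn.Nonempty)
    (hFncpt : IsCompact Fn) (hFnconv : Convex ℝ Fn) (hFnstate : ∀ σ ∈ Fn, IsState σ)
    (htens : ∀ σ ∈ F, tpow σ n ∈ Fn)
    (G : Set (Matrix κ κ ℂ)) (hGne : G.Nonempty) (hGcpt : IsCompact G)
    (hGconv : Convex ℝ G) (hGstate : ∀ σ ∈ G, IsState σ)
    (ρ : Matrix ι ι ℂ) (hρ : IsState ρ)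
    (hΩgt : 1 < Omega F ρ) (hΩfin : Omega F ρ ≠ ⊤)
    (φ : Matrix κ κ ℂ) (hφ : IsPure φ)
    (hFφ0 : 0 < Ffree G φ) (hFφ1 : Ffree G φ < 1)
    (E : Matrix (Fin n → ι) (Fin n → ι) ℂ →ₗ[ℂ] Matrix κ κ ℂ) (hE : IsPosMap E)
    (hEfree : ∀ x ∈ cone Fn, E x ∈ cone G)
    (τ : Matrix κ κ ℂ) (hτ : IsState τ)
    (p : ℝ) (hp : 0 < p) (hEρ : E (tpow ρ n) = p • τ)
    (ε : ℝ) (hε0 : 0 < ε) (hε : ε < 1 - Ffree G φ)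
    (hfid : 1 - ε ≤ ((φ * τ).trace).re) :
    Real.logb (Omega F ρ).toReal ((1 - ε) * (1 - Ffree G φ) / (ε * Ffree G φ)) ≤ n :=
  omega_distillation_overhead_general n F hFstate Fn htens G hGstate ρ hρ hΩgt hΩfin φ hφ hFφ0 E hE
    hEfree τ hτ p hp hEρ ε hε0 hε hfid
end

section
/- Lower semicontinuity of the projective robustness: if F is compact and convex, then Ω: states → [1,∞] defined by Ω(ρ) := min over σ ∈ F of R_max(ρ‖σ)·R_max(σ‖ρ) is lower semicontinuous with respect to the norm topology on states. -/
open scoped ENNReal NNReal ComplexOrder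
open Matrix

variable {ι κ : Type*}

/-!
`Ω(ρ)` is the infimum over the compact set `F` of `(ρ, σ) ↦ R_max(ρ‖σ) R_max(σ‖ρ)`, and by the tube
lemma an infimum over a compact set of a jointly lower semicontinuous function is lower
semicontinuous. For `σ ⪰ 0` the operator `lσ - ρ` increases with `l`, so if `cσ - ρ` is not
positive semidefinite then `R_max(ρ‖σ) ≥ c`; since the positive semidefinite cone is closed, this
is an open condition on `(ρ, σ)`. Hence `R_max` is lower semicontinuous, and so is the product of
the two `[0, ∞]`-valued factors.
-/

open Filter Topology

section Semicontinuity

variable {α β : Type*} [TopologicalSpace α] [TopologicalSpace β]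

theorem LowerSemicontinuousWithinAt.ennreal_mul {f g : α → ℝ≥0∞} {s : Set α} {x : α}
    (hf : LowerSemicontinuousWithinAt f s x) (hg : LowerSemicontinuousWithinAt g s x) :
    LowerSemicontinuousWithinAt (fun z => f z * g z) s x := by
  intro y hy
  have hf0 : f x ≠ 0 := left_ne_zero_of_mul (ne_bot_of_gt hy)
  have hg0 : g x ≠ 0 := right_ne_zero_of_mul (ne_bot_of_gt hy)
  have : (𝓝[<] (f x)).NeBot := nhdsLT_neBot_of_exists_lt ⟨0, pos_iff_ne_zero.2 hf0⟩
  have : (𝓝[<] (g x)).NeBot := nhdsLT_neBot_of_exists_lt ⟨0, pos_iff_ne_zero.2 hg0⟩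
  -- multiplication is continuous at `(f x, g x)` since neither factor is `0`
  have hlim : Tendsto (fun p : ℝ≥0∞ × ℝ≥0∞ => p.1 * p.2) (𝓝[<] (f x) ×ˢ 𝓝[<] (g x))
      (𝓝 (f x * g x)) :=
    (ENNReal.tendsto_mul (Or.inl hf0) (Or.inl hg0)).mono_left <| by
      rw [nhds_prod_eq]
      exact prod_mono nhdsWithin_le_nhds nhdsWithin_le_nhds
  obtain ⟨⟨a, b⟩, hab, ha, hb⟩ := ((hlim.eventually (lt_mem_nhds hy)).and
    (prod_mem_prod self_mem_nhdsWithin self_mem_nhdsWithin)).exists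
  filter_upwards [hf a ha, hg b hb] with z hfz hgz
  exact hab.trans_le (mul_le_mul' hfz.le hgz.le)

theorem LowerSemicontinuousOn.ennreal_mul {f g : α → ℝ≥0∞} {s : Set α}
    (hf : LowerSemicontinuousOn f s) (hg : LowerSemicontinuousOn g s) :
    LowerSemicontinuousOn (fun z => f z * g z) s :=
  fun x hx => LowerSemicontinuousWithinAt.ennreal_mul (hf x hx) (hg x hx)

theorem LowerSemicontinuousOn.biInf_of_isCompact {γ : Type*} [CompleteLinearOrder γ]
    [DenselyOrdered γ] {f : α × β → γ} {s : Set α} {K : Set β} (hK : IsCompact K)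
    (hf : LowerSemicontinuousOn f (s ×ˢ K)) :
    LowerSemicontinuousOn (fun x => ⨅ k ∈ K, f (x, k)) s := by
  intro x hx y hy
  obtain ⟨y', hyy', hy'⟩ := exists_between hy
  have hloc : ∀ k ∈ K, ∀ᶠ p : α × β in 𝓝[s] x ×ˢ 𝓝 k, p.2 ∈ K → y' < f p := by
    intro k hk
    have hfk := hf (x, k) ⟨hx, hk⟩ y' (hy'.trans_le (iInf₂_le k hk))
    have hprod : 𝓝[s] x ×ˢ 𝓝[K] k = 𝓝[s] x ×ˢ 𝓝 k ⊓ 𝓟 (Set.univ ×ˢ K) := by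
      rw [← prod_principal_principal, principal_univ, prod_inf_prod, inf_top_eq]
      rfl
    rw [nhdsWithin_prod_eq, hprod, eventually_inf_principal] at hfk
    exact hfk.mono fun p hp hpK => hp ⟨trivial, hpK⟩
  filter_upwards [Eventually.curry (hK.mem_prod_nhdsSet_of_forall hloc)] with z hz
  exact hyy'.trans_le (le_iInf₂ fun k hk => (hz.self_of_nhdsSet k hk hk).le)

end Semicontinuity

theorem Matrix.isClosed_setOf_posSemidef {𝕜 : Type*} [RCLike 𝕜] [Fintype ι] :
    IsClosed {A : Matrix ι ι 𝕜 | A.PosSemidef} := by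
  simp only [posSemidef_iff_dotProduct_mulVec, Set.ofPred_and, Set.ofPred_forall]
  exact (isClosed_eq continuous_id.matrix_conjTranspose continuous_id).inter <|
    isClosed_iInter fun x => isClosed_le continuous_const <|
      continuous_const.dotProduct (continuous_id.matrix_mulVec continuous_const)

section Rmax

variable [Fintype ι]

theorem Rmax_le_of_posSemidef {ρ σ : Matrix ι ι ℂ} {l : ℝ≥0}
    (h : ((l : ℝ) • σ - ρ).PosSemidef) : Rmax ρ σ ≤ l :=
  sInf_le ⟨l, rfl, h⟩

theorem le_Rmax_of_not_posSemidef {ρ σ : Matrix ι ι ℂ} (hσ : σ.PosSemidef) {c : ℝ≥0}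
    (hc : ¬((c : ℝ) • σ - ρ).PosSemidef) : (c : ℝ≥0∞) ≤ Rmax ρ σ := by
  refine le_sInf ?_
  rintro _ ⟨l, rfl, hl⟩
  by_contra! hlc
  have hcl : (0 : ℝ) ≤ c - l := sub_nonneg.2 (NNReal.coe_le_coe.2 (ENNReal.coe_lt_coe.1 hlc).le)
  -- `cσ - ρ = (c - l)σ + (lσ - ρ)`
  exact hc (by simpa [sub_smul] using (hσ.smul hcl).add hl)

theorem lowerSemicontinuousOn_Rmax :
    LowerSemicontinuousOn (fun p : Matrix ι ι ℂ × Matrix ι ι ℂ => Rmax p.1 p.2)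
      {p | p.2.PosSemidef} := by
  rintro ⟨ρ, σ⟩ - y hy
  obtain ⟨c, hyc, hcR⟩ := ENNReal.lt_iff_exists_nnreal_btwn.1 hy
  have hopen : IsOpen {p : Matrix ι ι ℂ × Matrix ι ι ℂ | ¬((c : ℝ) • p.2 - p.1).PosSemidef} :=
    Matrix.isClosed_setOf_posSemidef.isOpen_compl.preimage (by fun_prop)
  have hnot : ¬((c : ℝ) • σ - ρ).PosSemidef := fun h => (Rmax_le_of_posSemidef h).not_gt hcR
  filter_upwards [mem_nhdsWithin_of_mem_nhds (hopen.mem_nhds hnot), self_mem_nhdsWithin]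
    with p hp hpσ
  exact hyc.trans_le (le_Rmax_of_not_posSemidef hpσ hp)

theorem lowerSemicontinuousOn_Rmax_mul_Rmax :
    LowerSemicontinuousOn (fun p : Matrix ι ι ℂ × Matrix ι ι ℂ => Rmax p.1 p.2 * Rmax p.2 p.1)
      {p | p.1.PosSemidef ∧ p.2.PosSemidef} := by
  have hswap := (lowerSemicontinuousOn_Rmax (ι := ι)).comp (g := Prod.swap)
    (t := {p | p.1.PosSemidef}) continuous_swap.continuousOn fun _ hp => hp
  exact LowerSemicontinuousOn.ennreal_mul (lowerSemicontinuousOn_Rmax.mono fun _ hp => hp.2)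
    (hswap.mono fun _ hp => hp.1)

end Rmax

theorem omega_lowerSemicontinuousOn_general [Fintype ι]
    (F : Set (Matrix ι ι ℂ)) (hFcpt : IsCompact F)
    (hFstate : ∀ σ ∈ F, IsState σ) :
    LowerSemicontinuousOn (Omega F) {ρ : Matrix ι ι ℂ | IsState ρ} := by
  refine LowerSemicontinuousOn.biInf_of_isCompact
    (f := fun p => Rmax p.1 p.2 * Rmax p.2 p.1) hFcpt ?_
  exact lowerSemicontinuousOn_Rmax_mul_Rmax.mono fun p hp => ⟨hp.1.1, (hFstate p.2 hp.2).1⟩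

/-- lower semicontinuity of the projective robustness on states, for `F` compact
and convex. -/
theorem omega_lowerSemicontinuousOn [Fintype ι] [DecidableEq ι]
    (F : Set (Matrix ι ι ℂ)) (hFne : F.Nonempty) (hFcpt : IsCompact F)
    (hFconv : Convex ℝ F) (hFstate : ∀ σ ∈ F, IsState σ) :
    LowerSemicontinuousOn (Omega F) {ρ : Matrix ι ι ℂ | IsState ρ} :=
  omega_lowerSemicontinuousOn_general F hFcpt hFstate
end
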